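/- Let D, F, K be nonempty HN data such that: D is semistable, K is not semistable, μ_max(D) < μ_min(F), rk(D) = rk(K) and deg(D) = deg(K). Then P_{F⊕K}(k) ≥ P_{F⊕D}(k) for every integer 0 ≤ k ≤ rk(F) + rk(K), and for every integer k with 0 < k < rk(F) + rk(K) equality P_{F⊕K}(k) = P_{F⊕D}(k) holds if and only if k ≤ rk(F^{≥ μ_max(K)}); that is, the HN polygon of F ⊕ K lies on or above that of F ⊕ D, and the common part of the two polygons is exactly the HN polygon of F^{≥ μ_max(K)} together with the right endpoint. -/

import Mathlib

/-!
Write `f`, `κ` for the slope sequences of `F`, `K` and `μ` for the common slope of `D` and `K`.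
The polygon of `F ⊕ E` at `k` is the sum of the `k` largest entries of the merged slope sequences
(`topSum`). Since `μ < μ_min(F)`, the polygon of `F ⊕ D` is that of `F` followed by a segment of
slope `μ`. Choosing the first `k` slopes of `f` (and, past `rk F`, the first slopes of `κ`) bounds
the polygon of `F ⊕ K` from below, because the partial sums of `κ` lie above the chord of slope
`μ`, strictly in the interior as `κ` is not constant. Up to `rk F^{≥ μ_max(K)}` every slope of `f`
used dominates every slope of `κ`, so no choice does better. Beyond it, either we are past `rk F`,
where the chord bound is strict, or the `k`-th slope of `f` is `< μ_max(K)` and trading it for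
`μ_max(K)` gains.
-/

namespace HN

def slope (v : ℤ × ℤ) : ℚ := (v.2 : ℚ) / (v.1 : ℚ)

def cross (v w : ℤ × ℤ) : ℤ := v.1 * w.2 - v.2 * w.1

def IsHNDatum (E : List (ℤ × ℤ)) : Prop :=
  (∀ v ∈ E, 1 ≤ v.1) ∧ E.Pairwise (fun v w => slope w < slope v)

def rk (E : List (ℤ × ℤ)) : ℤ := (E.map Prod.fst).sum

def deg (E : List (ℤ × ℤ)) : ℤ := (E.map Prod.snd).sum

def delta (E F : List (ℤ × ℤ)) : ℤ :=
  (E.map fun e => ((F.filter fun f => decide (slope e ≤ slope f)).map fun f => cross e f).sum).sum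

def geSlope (E : List (ℤ × ℤ)) (μ : ℚ) : List (ℤ × ℤ) := E.filter fun v => decide (μ ≤ slope v)
def gtSlope (E : List (ℤ × ℤ)) (μ : ℚ) : List (ℤ × ℤ) := E.filter fun v => decide (μ < slope v)
def ltSlope (E : List (ℤ × ℤ)) (μ : ℚ) : List (ℤ × ℤ) := E.filter fun v => decide (slope v < μ)

def sigmaList (E : List (ℤ × ℤ)) : List ℚ :=
  E.flatMap fun v => List.replicate v.1.toNat (slope v)

def sigmaSlope (E : List (ℤ × ℤ)) (i : ℕ) : ℚ := (sigmaList E).getD (i - 1) 0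

def poly (E : List (ℤ × ℤ)) (k : ℕ) : ℚ := ((sigmaList E).take k).sum

def polySum (A B : List (ℤ × ℤ)) (k : ℕ) : ℚ :=
  (((sigmaList A ++ sigmaList B).mergeSort fun a b => decide (b ≤ a)).take k).sum

def SlopewiseDom (E F : List (ℤ × ℤ)) : Prop :=
  ∀ μ : ℚ, rk (geSlope F μ) ≤ rk (geSlope E μ)

def StrongSlopewiseDom (E F : List (ℤ × ℤ)) : Prop :=
  SlopewiseDom E F ∧ ∀ μ : ℚ, rk (geSlope E μ) = rk (geSlope F μ) → geSlope E μ = geSlope F μ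

def dual (E : List (ℤ × ℤ)) : List (ℤ × ℤ) := (E.map fun v => (v.1, -v.2)).reverse

def HNleSum (E A B : List (ℤ × ℤ)) : Prop :=
  rk E = rk A + rk B ∧ deg E = deg A + deg B ∧
    ∀ k : ℕ, (k : ℤ) ≤ rk E → poly E k ≤ polySum A B k

def HasVertex (V : List (ℤ × ℤ)) (j : ℕ) : Prop :=
  (j : ℤ) = rk V ∨ sigmaSlope V (j + 1) < sigmaSlope V j

lemma exists_le_take_and_drop_le {α : Type*} [Preorder α] {l : List α}
    (hl : l.Pairwise (· ≥ ·)) {j : ℕ} (hj : j < l.length) :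
    ∃ c, (∀ x ∈ l.take j, c ≤ x) ∧ ∀ y ∈ l.drop j, y ≤ c := by
  have hdrop := List.drop_eq_getElem_cons hj
  refine ⟨l[j], fun x hx => hl.rel_of_mem_take_of_mem_drop hx ?_, ?_⟩
  · rw [hdrop]
    exact List.mem_cons_self
  have hpw : (l.drop j).Pairwise (· ≥ ·) := hl.drop
  rw [hdrop, List.pairwise_cons] at hpw
  intro y hy
  rw [hdrop, List.mem_cons] at hy
  rcases hy with rfl | hy
  exacts [le_rfl, hpw.1 y hy]

section SortedSums

variable {α : Type*} [Field α] [LinearOrder α] [IsStrictOrderedRing α]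

lemma sum_take_le_sum_take_cons {l : List α} {a : α} (ha : ∀ b ∈ l, a ≥ b) {n : ℕ}
    (hn : n ≤ l.length) : (l.take n).sum ≤ ((a :: l).take n).sum := by
  cases n with
  | zero => simp
  | succ n =>
    rw [List.sum_take_succ l n (by omega), List.take_succ_cons, List.sum_cons]
    linarith [ha _ (List.getElem_mem (by omega : n < l.length))]

lemma sum_le_sum_take_of_le {l : List α} (hl : l.Pairwise (· ≥ ·)) {T : Multiset α}
    (hT : T ≤ l) : T.sum ≤ (l.take (Multiset.card T)).sum := by
  induction l generalizing T with
  | nil => simp [Multiset.le_zero.1 (by simpa using hT)]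
  | cons a l ih =>
    rw [List.pairwise_cons] at hl
    rw [← Multiset.cons_coe] at hT
    by_cases haT : a ∈ T
    · obtain ⟨T, rfl⟩ := Multiset.exists_cons_of_mem haT
      rw [Multiset.sum_cons, Multiset.card_cons, List.take_succ_cons, List.sum_cons]
      linarith [ih hl.2 ((Multiset.cons_le_cons_iff a).1 hT)]
    · have hT : T ≤ l := (Multiset.le_cons_of_notMem haT).1 hT
      exact (ih hl.2 hT).trans
        (sum_take_le_sum_take_cons hl.1 (by simpa using Multiset.card_le_card hT))

lemma mul_sum_le_length_mul_sum_take {l : List α} (hl : l.Pairwise (· ≥ ·)) {j : ℕ}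
    (hj : j ≤ l.length) : j * l.sum ≤ l.length * (l.take j).sum := by
  rcases hj.eq_or_lt with rfl | hj
  · rw [List.take_length]
  obtain ⟨c, htake, hdrop⟩ := exists_le_take_and_drop_le hl hj
  have hA := List.card_nsmul_le_sum _ _ htake
  have hB := List.sum_le_card_nsmul _ _ hdrop
  rw [← List.sum_take_add_sum_drop l j]
  simp only [List.length_take, List.length_drop, nsmul_eq_mul, min_eq_left hj.le] at hA hB
  have hl : (l.length : α) = j + ((l.length - j : ℕ) : α) := by push_cast [hj.le]; ring
  rw [hl]
  nlinarith

lemma mul_sum_lt_length_mul_sum_take {l : List α} (hl : l.Pairwise (· ≥ ·)) {x y : α}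
    (hx : x ∈ l) (hy : y ∈ l) (hxy : x ≠ y) {j : ℕ} (hj0 : 0 < j) (hj : j < l.length) :
    j * l.sum < l.length * (l.take j).sum := by
  obtain ⟨c, htake, hdrop⟩ := exists_le_take_and_drop_le hl hj
  obtain ⟨z, hz, hzc⟩ : ∃ z ∈ l, z ≠ c := by
    by_cases hxc : x = c
    exacts [⟨y, hy, fun h => hxy (hxc.trans h.symm)⟩, ⟨x, hx, hxc⟩]
  have hA := List.card_nsmul_le_sum _ _ htake
  have hB := List.sum_le_card_nsmul _ _ hdrop
  -- `l` is not constant, so one of the two bounds is strict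
  have hstrict : j • c < (l.take j).sum ∨ (l.drop j).sum < (l.length - j) • c := by
    rw [← List.take_append_drop j l, List.mem_append] at hz
    rcases hz with hz | hz
    · left
      simpa [min_eq_left hj.le] using List.sum_lt_sum (fun _ => c) id htake
        ⟨z, hz, (htake z hz).lt_of_ne' hzc⟩
    · right
      simpa using List.sum_lt_sum id (fun _ => c) hdrop ⟨z, hz, (hdrop z hz).lt_of_ne hzc⟩
  rw [← List.sum_take_add_sum_drop l j]
  simp only [List.length_take, List.length_drop, nsmul_eq_mul, min_eq_left hj.le] at hA hB hstrict
  have hlen : (l.length : α) = j + ((l.length - j : ℕ) : α) := by push_cast [hj.le]; ring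
  have hj0' : (0 : α) < j := by exact_mod_cast hj0
  have hm : (0 : α) < ((l.length - j : ℕ) : α) := by exact_mod_cast Nat.sub_pos_of_lt hj
  rw [hlen]
  rcases hstrict with h | h <;> nlinarith

end SortedSums

def topSum (l : List ℚ) (k : ℕ) : ℚ :=
  ((l.mergeSort fun a b => decide (b ≤ a)).take k).sum

lemma polySum_eq_topSum (A B : List (ℤ × ℤ)) (k : ℕ) :
    polySum A B k = topSum (sigmaList A ++ sigmaList B) k := rfl

lemma pairwise_mergeSort_ge (l : List ℚ) :
    (l.mergeSort fun a b => decide (b ≤ a)).Pairwise (· ≥ ·) := by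
  simpa using List.pairwise_mergeSort (le := fun a b : ℚ => decide (b ≤ a))
    (fun a b c hab hbc => by simp only [decide_eq_true_eq] at *; linarith)
    (fun a b => by simp [le_total b a]) l

lemma topSum_of_pairwise {l : List ℚ} (hl : l.Pairwise (· ≥ ·)) (k : ℕ) :
    topSum l k = (l.take k).sum := by
  rw [topSum, List.mergeSort_of_pairwise (by simpa using hl)]

lemma sum_le_topSum_of_subperm {s l : List ℚ} (h : s.Subperm l) :
    s.sum ≤ topSum l s.length := by
  have hs : (s : Multiset ℚ) ≤ (l.mergeSort fun a b => decide (b ≤ a)) :=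
    Multiset.coe_le.2 (h.trans (List.mergeSort_perm _ _).symm.subperm)
  simpa [topSum] using sum_le_sum_take_of_le (pairwise_mergeSort_ge l) hs

lemma exists_topSum_append_le {l₁ l₂ : List ℚ} (h₁ : l₁.Pairwise (· ≥ ·))
    (h₂ : l₂.Pairwise (· ≥ ·)) {k : ℕ} (hk : k ≤ l₁.length + l₂.length) :
    ∃ i j, i + j = k ∧ j ≤ l₂.length ∧
      topSum (l₁ ++ l₂) k ≤ (l₁.take i).sum + (l₂.take j).sum := by
  set s := (l₁ ++ l₂).mergeSort fun a b => decide (b ≤ a)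
  have hlen : s.length = l₁.length + l₂.length := by
    rw [List.length_mergeSort, List.length_append]
  set T : Multiset ℚ := ↑(s.take k)
  set L₂ : Multiset ℚ := ↑l₂
  have hT : T ≤ l₁ + L₂ :=
    Multiset.coe_le.2 ((List.take_sublist k s).subperm.trans (List.mergeSort_perm _ _).subperm)
  have hT₁ : T - L₂ ≤ l₁ := Multiset.sub_le_iff_le_add.2 hT
  have hT₂ : T ∩ L₂ ≤ L₂ := Multiset.inter_le_right
  refine ⟨Multiset.card (T - L₂), Multiset.card (T ∩ L₂), ?_,
    (Multiset.card_le_card hT₂).trans_eq (Multiset.coe_card l₂), ?_⟩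
  · rw [← Multiset.card_add, Multiset.sub_add_inter, Multiset.coe_card, List.length_take, hlen]
    exact min_eq_left hk
  · calc topSum (l₁ ++ l₂) k = (T - L₂).sum + (T ∩ L₂).sum := by
          rw [← Multiset.sum_add, Multiset.sub_add_inter, Multiset.sum_coe]; rfl
      _ ≤ _ := add_le_add (sum_le_sum_take_of_le h₁ hT₁) (sum_le_sum_take_of_le h₂ hT₂)

lemma le_getElem_iff_lt_length_filter {l : List ℚ} (hl : l.Pairwise (· ≥ ·)) (μ : ℚ)
    {i : ℕ} (hi : i < l.length) : μ ≤ l[i] ↔ i < (l.filter (μ ≤ ·)).length := by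
  induction l generalizing i with
  | nil => simp at hi
  | cons a l ih =>
    rw [List.pairwise_cons] at hl
    by_cases ha : μ ≤ a
    · rw [List.filter_cons_of_pos (by simpa using ha), List.length_cons]
      cases i with
      | zero => simpa using ha
      | succ i => simpa using ih hl.2 (by simpa using hi)
    · have hfilter : l.filter (μ ≤ ·) = [] :=
        List.filter_eq_nil_iff.2 fun b hb hμb => ha ((of_decide_eq_true hμb).trans (hl.1 b hb))
      rw [List.filter_cons_of_neg (by simpa using ha), hfilter]
      have hle : (a :: l)[i] ≤ a := by
        cases i with
        | zero => exact le_rfl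
        | succ i => exact hl.1 _ (List.getElem_mem _)
      simp only [List.length_nil, Nat.not_lt_zero, iff_false]
      exact fun h => ha (h.trans hle)

lemma mem_sigmaList {E : List (ℤ × ℤ)} {x : ℚ} :
    x ∈ sigmaList E ↔ ∃ v ∈ E, 0 < v.1 ∧ slope v = x := by
  simp [sigmaList, eq_comm]

lemma pairwise_sigmaList {E : List (ℤ × ℤ)} (hE : E.Pairwise fun v w => slope w < slope v) :
    (sigmaList E).Pairwise (· ≥ ·) := by
  refine List.pairwise_flatMap.2
    ⟨fun v _ => List.pairwise_replicate.2 (Or.inr le_rfl), hE.imp fun h x hx y hy => ?_⟩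
  rw [List.eq_of_mem_replicate hx, List.eq_of_mem_replicate hy]
  exact h.le

lemma length_sigmaList {E : List (ℤ × ℤ)} (hE : ∀ v ∈ E, 0 ≤ v.1) :
    ((sigmaList E).length : ℤ) = rk E := by
  rw [sigmaList, List.length_flatMap, Nat.cast_list_sum, rk, List.map_map]
  exact congrArg List.sum (List.map_congr_left fun v hv => by simp [hE v hv])

lemma sum_sigmaList {E : List (ℤ × ℤ)} (hE : ∀ v ∈ E, 0 < v.1) :
    (sigmaList E).sum = deg E := by
  rw [sigmaList, List.flatMap_def, List.sum_flatten, List.map_map, deg, Int.cast_list_sum,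
    List.map_map]
  refine congrArg List.sum (List.map_congr_left fun v hv => ?_)
  have hv0 : (v.1 : ℚ) ≠ 0 := by exact_mod_cast (hE v hv).ne'
  have hcast : ((v.1.toNat : ℕ) : ℚ) = v.1 := by exact_mod_cast Int.toNat_of_nonneg (hE v hv).le
  simp only [Function.comp_apply, List.sum_replicate, nsmul_eq_mul, hcast, slope]
  field_simp

lemma sigmaList_geSlope (E : List (ℤ × ℤ)) (μ : ℚ) :
    sigmaList (geSlope E μ) = (sigmaList E).filter (μ ≤ ·) := by
  induction E with
  | nil => rfl
  | cons v E ih =>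
    by_cases h : μ ≤ slope v <;> simp_all [sigmaList, geSlope]

lemma rk_geSlope {E : List (ℤ × ℤ)} (hE : ∀ v ∈ E, 0 ≤ v.1) (μ : ℚ) :
    rk (geSlope E μ) = ((sigmaList E).filter (μ ≤ ·)).length := by
  rw [← length_sigmaList (E := geSlope E μ) fun v hv => hE v (List.mem_of_mem_filter hv),
    sigmaList_geSlope]

lemma slope_getLast_le_of_mem_sigmaList {F : List (ℤ × ℤ)}
    (hF : F.Pairwise fun v w => slope w < slope v) (hne : F ≠ []) {x : ℚ}
    (hx : x ∈ sigmaList F) : slope (F.getLast hne) ≤ x := by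
  obtain ⟨v, hv, -, rfl⟩ := mem_sigmaList.1 hx
  exact (hF.imp le_of_lt).rel_getLast_of_rel_getLast_getLast hv le_rfl

lemma le_slope_of_mem_sigmaList_cons {v : ℤ × ℤ} {E : List (ℤ × ℤ)}
    (hE : (v :: E).Pairwise fun v w => slope w < slope v) {x : ℚ}
    (hx : x ∈ sigmaList (v :: E)) : x ≤ slope v := by
  obtain ⟨w, hw, -, rfl⟩ := mem_sigmaList.1 hx
  rcases List.mem_cons.1 hw with rfl | hw
  exacts [le_rfl, (List.rel_of_pairwise_cons hE hw).le]

lemma rk_singleton (e : ℤ × ℤ) : rk [e] = e.1 := by simp [rk]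

lemma sigmaList_singleton_eq_replicate {e : ℤ × ℤ} {K : List (ℤ × ℤ)}
    (hK : ∀ v ∈ K, 0 ≤ v.1) (hrk : rk [e] = rk K) :
    sigmaList [e] = List.replicate (sigmaList K).length (slope e) := by
  have hlen := length_sigmaList hK
  have he : e.1.toNat = (sigmaList K).length := by
    rw [rk_singleton] at hrk
    omega
  simp [sigmaList, he]

lemma sum_sigmaList_eq_length_mul_slope {e : ℤ × ℤ} {K : List (ℤ × ℤ)}
    (hK : ∀ v ∈ K, 0 < v.1) (hKne : K ≠ []) (hrk : rk [e] = rk K) (hdeg : deg [e] = deg K) :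
    (sigmaList K).sum = (sigmaList K).length * slope e := by
  have he : ∀ v ∈ [e], 0 < v.1 := by
    simp only [List.mem_singleton, forall_eq]
    have hpos := List.sum_pos (K.map Prod.fst)
      (fun x hx => by obtain ⟨v, hv, rfl⟩ := List.mem_map.1 hx; exact hK v hv)
      (by simpa using hKne)
    rwa [← rk_singleton, hrk]
  rw [sum_sigmaList hK, ← hdeg, ← sum_sigmaList he,
    sigmaList_singleton_eq_replicate (fun v hv => (hK v hv).le) hrk, List.sum_replicate,
    nsmul_eq_mul]

section Polygon

variable {f κ : List ℚ} {μ : ℚ}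

lemma topSum_append_replicate (hf : f.Pairwise (· ≥ ·)) (hfμ : ∀ x ∈ f, μ ≤ x)
    {n k : ℕ} (hk : k ≤ f.length + n) :
    topSum (f ++ List.replicate n μ) k = (f.take k).sum + (k - f.length : ℕ) * μ := by
  have hsorted : (f ++ List.replicate n μ).Pairwise (· ≥ ·) :=
    List.pairwise_append.2 ⟨hf, List.pairwise_replicate.2 (Or.inr le_rfl),
      fun x hx y hy => List.eq_of_mem_replicate hy ▸ hfμ x hx⟩
  rw [topSum_of_pairwise hsorted, List.take_append, List.sum_append, List.take_replicate,
    List.sum_replicate, nsmul_eq_mul, min_eq_left (by omega)]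

lemma sum_take_add_mul_le_topSum (hκ : κ.Pairwise (· ≥ ·)) (hκμ : κ.sum = κ.length * μ)
    {k : ℕ} (hk : k ≤ f.length + κ.length) :
    (f.take k).sum + (k - f.length : ℕ) * μ ≤ topSum (f ++ κ) k := by
  set j := k - f.length
  have hj : j ≤ κ.length := by omega
  have hchord : j * μ ≤ (κ.take j).sum := by
    have := mul_sum_le_length_mul_sum_take hκ hj
    rw [hκμ] at this
    rcases Nat.eq_zero_or_pos κ.length with h0 | h0
    · simp [show j = 0 by omega]
    · have : (0 : ℚ) < κ.length := by exact_mod_cast h0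
      nlinarith
  have hsub : (f.take k ++ κ.take j).Subperm (f ++ κ) :=
    ((List.take_sublist _ _).append (List.take_sublist _ _)).subperm
  have hlen : (f.take k ++ κ.take j).length = k := by simp; omega
  calc _ ≤ (f.take k ++ κ.take j).sum := by rw [List.sum_append]; linarith
    _ ≤ topSum (f ++ κ) k := (sum_le_topSum_of_subperm hsub).trans_eq (by rw [hlen])

lemma sum_take_add_mul_lt_topSum (hf : f.Pairwise (· ≥ ·)) (hκ : κ.Pairwise (· ≥ ·))
    (hκμ : κ.sum = κ.length * μ) {a y : ℚ} (ha : a ∈ κ) (hy : y ∈ κ) (hya : y < a)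
    {k : ℕ} (hmk : (f.filter (a ≤ ·)).length < k) (hk : k < f.length + κ.length) :
    (f.take k).sum + (k - f.length : ℕ) * μ < topSum (f ++ κ) k := by
  rcases le_or_gt k f.length with hkf | hkf
  · have hlt : f[k - 1] < a :=
      not_le.1 fun h => by have := (le_getElem_iff_lt_length_filter hf a _).1 h; omega
    have hsub : (f.take (k - 1) ++ [a]).Subperm (f ++ κ) :=
      ((List.take_sublist _ _).append (List.singleton_sublist.2 ha)).subperm
    have hlen : (f.take (k - 1) ++ [a]).length = k := by simp; omega
    calc (f.take k).sum + (k - f.length : ℕ) * μ = (f.take (k - 1)).sum + f[k - 1] := by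
          rw [Nat.sub_eq_zero_of_le hkf, ← List.sum_take_succ, Nat.sub_add_cancel (by omega)]
          simp
      _ < (f.take (k - 1) ++ [a]).sum := by simpa using hlt
      _ ≤ topSum (f ++ κ) k := (sum_le_topSum_of_subperm hsub).trans_eq (by rw [hlen])
  · set j := k - f.length
    have hchord := mul_sum_lt_length_mul_sum_take hκ ha hy hya.ne' (j := j) (by omega) (by omega)
    rw [hκμ] at hchord
    have h0 : (0 : ℚ) < κ.length := by exact_mod_cast List.length_pos_of_mem ha
    have hsub : (f ++ κ.take j).Subperm (f ++ κ) :=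
      ((List.Sublist.refl f).append (List.take_sublist _ _)).subperm
    have hlen : (f ++ κ.take j).length = k := by simp; omega
    calc (f.take k).sum + (k - f.length : ℕ) * μ = f.sum + j * μ := by
          rw [List.take_of_length_le hkf.le]
      _ < (f ++ κ.take j).sum := by rw [List.sum_append]; nlinarith
      _ ≤ topSum (f ++ κ) k := (sum_le_topSum_of_subperm hsub).trans_eq (by rw [hlen])

lemma topSum_append_le_sum_take (hf : f.Pairwise (· ≥ ·)) (hκ : κ.Pairwise (· ≥ ·))
    {a : ℚ} (hκa : ∀ y ∈ κ, y ≤ a) {k : ℕ} (hk : k ≤ f.length)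
    (hfa : ∀ x ∈ f.take k, a ≤ x) :
    topSum (f ++ κ) k ≤ (f.take k).sum := by
  obtain ⟨i, j, rfl, hj, hle⟩ := exists_topSum_append_le hf hκ (k := k) (by omega)
  have hκj := List.sum_le_card_nsmul (κ.take j) a fun y hy => hκa y (List.mem_of_mem_take hy)
  have hfj := List.card_nsmul_le_sum ((f.drop i).take j) a fun x hx => hfa x (by
    rw [List.take_add]; exact List.mem_append_right _ hx)
  rw [List.length_take, min_eq_left hj, nsmul_eq_mul] at hκj
  rw [List.length_take, List.length_drop, min_eq_left (by omega), nsmul_eq_mul] at hfj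
  rw [List.take_add, List.sum_append]
  linarith

theorem topSum_append_replicate_le (hf : f.Pairwise (· ≥ ·)) (hκ : κ.Pairwise (· ≥ ·))
    (hfμ : ∀ x ∈ f, μ ≤ x) (hκμ : κ.sum = κ.length * μ) {k : ℕ}
    (hk : k ≤ f.length + κ.length) :
    topSum (f ++ List.replicate κ.length μ) k ≤ topSum (f ++ κ) k := by
  rw [topSum_append_replicate hf hfμ hk]
  exact sum_take_add_mul_le_topSum hκ hκμ hk

theorem topSum_append_eq_iff (hf : f.Pairwise (· ≥ ·)) (hκ : κ.Pairwise (· ≥ ·))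
    (hfμ : ∀ x ∈ f, μ ≤ x) (hκμ : κ.sum = κ.length * μ) {a y : ℚ} (ha : a ∈ κ)
    (hκa : ∀ z ∈ κ, z ≤ a) (hy : y ∈ κ) (hya : y < a) {k : ℕ}
    (hk : k < f.length + κ.length) :
    topSum (f ++ κ) k = topSum (f ++ List.replicate κ.length μ) k ↔
      k ≤ (f.filter (a ≤ ·)).length := by
  rw [topSum_append_replicate hf hfμ hk.le]
  refine ⟨fun h => not_lt.1 fun hmk =>
    (sum_take_add_mul_lt_topSum hf hκ hκμ ha hy hya hmk hk).ne' h, fun hmk => ?_⟩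
  have hkf : k ≤ f.length := hmk.trans (List.length_filter_le _ _)
  refine le_antisymm ?_ (sum_take_add_mul_le_topSum hκ hκμ hk.le)
  rw [Nat.sub_eq_zero_of_le hkf, Nat.cast_zero, zero_mul, add_zero]
  refine topSum_append_le_sum_take hf hκ hκa hkf fun x hx => ?_
  obtain ⟨i, hi, rfl⟩ := List.getElem_of_mem hx
  rw [List.getElem_take]
  exact (le_getElem_iff_lt_length_filter hf a _).2 (by simp at hi; omega)

end Polygon

theorem statement9_general (D F K : List (ℤ × ℤ))
    (hF : IsHNDatum F) (hK : IsHNDatum K)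
    (hDne : D ≠ []) (hFne : F ≠ []) (hKne : K ≠ [])
    (hDss : D.length ≤ 1) (hKnss : ¬ K.length ≤ 1)
    (hslope : slope (D.head hDne) < slope (F.getLast hFne))
    (hrk : rk D = rk K) (hdeg : deg D = deg K) :
    (∀ k : ℕ, (k : ℤ) ≤ rk F + rk K → polySum F D k ≤ polySum F K k) ∧
    (∀ k : ℕ, 0 < k → (k : ℤ) < rk F + rk K →
      (polySum F K k = polySum F D k ↔ (k : ℤ) ≤ rk (geSlope F (slope (K.head hKne))))) := by
  obtain ⟨e, rfl⟩ := List.length_eq_one_iff.1 (le_antisymm hDss (List.length_pos_iff.2 hDne))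
  rcases K with _ | ⟨k₁, _ | ⟨k₂, K⟩⟩
  · exact absurd rfl hKne
  · exact absurd (by simp) hKnss
  have hFpos : ∀ v ∈ F, 0 < v.1 := hF.1
  have hKpos : ∀ v ∈ k₁ :: k₂ :: K, 0 < v.1 := hK.1
  have hf := pairwise_sigmaList hF.2
  have hκ := pairwise_sigmaList hK.2
  have hfμ : ∀ x ∈ sigmaList F, slope e ≤ x := fun _ hx =>
    hslope.le.trans (slope_getLast_le_of_mem_sigmaList hF.2 hFne hx)
  have hκμ := sum_sigmaList_eq_length_mul_slope hKpos hKne hrk hdeg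
  have hk₁ : slope k₁ ∈ sigmaList (k₁ :: k₂ :: K) :=
    mem_sigmaList.2 ⟨k₁, by simp, hKpos k₁ (by simp), rfl⟩
  have hk₂ : slope k₂ ∈ sigmaList (k₁ :: k₂ :: K) :=
    mem_sigmaList.2 ⟨k₂, by simp, hKpos k₂ (by simp), rfl⟩
  simp only [polySum_eq_topSum, List.head_cons, rk_geSlope fun v hv => (hFpos v hv).le,
    sigmaList_singleton_eq_replicate (fun v hv => (hKpos v hv).le) hrk,
    ← length_sigmaList fun v hv => (hFpos v hv).le,
    ← length_sigmaList fun v hv => (hKpos v hv).le]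
  refine ⟨fun k hk => topSum_append_replicate_le hf hκ hfμ hκμ (by exact_mod_cast hk),
    fun k _ hk => ?_⟩
  exact_mod_cast topSum_append_eq_iff hf hκ hfμ hκμ hk₁
    (fun _ => le_slope_of_mem_sigmaList_cons hK.2) hk₂ (List.rel_of_pairwise_cons hK.2 (by simp))
    (by exact_mod_cast hk)

/-- For D semistable, K not semistable, μ_max(D) < μ_min(F), rk(D) = rk(K),
deg(D) = deg(K): the polygon of F ⊕ K lies on or above that of F ⊕ D, and the
common part is exactly the polygon of F^{≥ μ_max(K)} (plus the right endpoint). -/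
theorem statement9 (D F K : List (ℤ × ℤ))
    (hD : IsHNDatum D) (hF : IsHNDatum F) (hK : IsHNDatum K)
    (hDne : D ≠ []) (hFne : F ≠ []) (hKne : K ≠ [])
    (hDss : D.length ≤ 1) (hKnss : ¬ K.length ≤ 1)
    (hslope : slope (D.head hDne) < slope (F.getLast hFne))
    (hrk : rk D = rk K) (hdeg : deg D = deg K) :
    (∀ k : ℕ, (k : ℤ) ≤ rk F + rk K → polySum F D k ≤ polySum F K k) ∧
    (∀ k : ℕ, 0 < k → (k : ℤ) < rk F + rk K →
      (polySum F K k = polySum F D k ↔ (k : ℤ) ≤ rk (geSlope F (slope (K.head hKne))))) :=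
  statement9_general D F K hF hK hDne hFne hKne hDss hKnss hslope hrk hdeg

end HN
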